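/- Let U ⊆ ℂ be a nonempty open connected set, let f, ζ, h : ℂ → ℂ be functions such that f and ζ are real-differentiable at every point of U, and such that for all z ∈ U the Wirtinger equations ∂ζ/∂z̄(z) = h(z) and ∂f/∂z̄(z) + h(z)·f(z) = 0 hold. Then either f is identically zero on U, or the zero set {z ∈ U : f(z) = 0} consists of isolated points (every zero z₀ has a punctured neighborhood in U on which f does not vanish). -/

import Mathlib

noncomputable def wirtingerBar (g : ℂ → ℂ) (z : ℂ) : ℂ :=
  (1 / 2 : ℂ) * (fderiv ℝ g z 1 + Complex.I * fderiv ℝ g z Complex.I)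

/-!
The function `e^ζ` is an integrating factor: by the product and chain rules for `∂/∂z̄`,
`∂(f e^ζ)/∂z̄ = (∂f/∂z̄ + h f) e^ζ = 0` on `U`, so `f e^ζ` is holomorphic there by the
Cauchy–Riemann equations. It has the same zeros as `f`, and the identity theorem for analytic
functions on the connected set `U` gives the dichotomy.
-/

open Complex Filter Topology

section Wirtinger

variable {f g : ℂ → ℂ} {z : ℂ}

theorem wirtingerBar_eq_zero_iff :
    wirtingerBar g z = 0 ↔ fderiv ℝ g z I = I • fderiv ℝ g z 1 := by
  rw [wirtingerBar, smul_eq_mul]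
  constructor <;> intro h
  · linear_combination (-2 * I) * h + fderiv ℝ g z I * I_sq
  · linear_combination I / 2 * h + fderiv ℝ g z 1 / 2 * I_sq

theorem differentiableAt_complex_iff_wirtingerBar_eq_zero (hg : DifferentiableAt ℝ g z) :
    DifferentiableAt ℂ g z ↔ wirtingerBar g z = 0 := by
  rw [differentiableAt_complex_iff_differentiableAt_real, wirtingerBar_eq_zero_iff,
    and_iff_right hg]

theorem wirtingerBar_mul (hf : DifferentiableAt ℝ f z) (hg : DifferentiableAt ℝ g z) :
    wirtingerBar (fun w => f w * g w) z = wirtingerBar f z * g z + f z * wirtingerBar g z := by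
  simp only [wirtingerBar, fderiv_fun_mul hf hg, add_apply, smul_apply, smul_eq_mul]
  ring

theorem DifferentiableAt.wirtingerBar_comp {φ : ℂ → ℂ} (hφ : DifferentiableAt ℂ φ (g z))
    (hg : DifferentiableAt ℝ g z) :
    wirtingerBar (fun w => φ (g w)) z = deriv φ (g z) * wirtingerBar g z := by
  have hφℝ : fderiv ℝ φ (g z) = (fderiv ℂ φ (g z)).restrictScalars ℝ :=
    hφ.fderiv_restrictScalars ℝ
  simp only [wirtingerBar, fderiv_fun_comp z (hφ.restrictScalars ℝ) hg, hφℝ,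
    ContinuousLinearMap.coe_comp, Function.comp_apply,
    ContinuousLinearMap.coe_restrictScalars', fderiv_eq_smul_deriv, smul_eq_mul]
  ring

theorem differentiableAt_mul_cexp_of_wirtingerBar_add_mul_eq_zero {ζ : ℂ → ℂ}
    (hf : DifferentiableAt ℝ f z) (hζ : DifferentiableAt ℝ ζ z)
    (hfζ : wirtingerBar f z + wirtingerBar ζ z * f z = 0) :
    DifferentiableAt ℂ (fun w => f w * exp (ζ w)) z := by
  have hexp : DifferentiableAt ℝ (fun w => exp (ζ w)) z := hζ.cexp
  rw [differentiableAt_complex_iff_wirtingerBar_eq_zero (hf.fun_mul hexp),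
    wirtingerBar_mul hf hexp, (differentiableAt_exp (x := ζ z)).wirtingerBar_comp hζ, Complex.deriv_exp]
  linear_combination exp (ζ z) * hfζ

end Wirtinger

theorem AnalyticOnNhd.eqOn_zero_or_eventually_ne_zero_nhdsNE {𝕜 E : Type*}
    [NontriviallyNormedField 𝕜] [NormedAddCommGroup E] [NormedSpace 𝕜 E] [CompleteSpace 𝕜]
    {g : 𝕜 → E} {U : Set 𝕜} (hg : AnalyticOnNhd 𝕜 g U) (hU : IsPreconnected U) :
    Set.EqOn g 0 U ∨ ∀ z₀ ∈ U, ∀ᶠ z in 𝓝[≠] z₀, g z ≠ 0 :=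
  or_iff_not_imp_left.2 fun hne z₀ hz₀ =>
    (hg z₀ hz₀).eventually_eq_zero_or_eventually_ne_zero.resolve_left fun hzero =>
      hne (hg.eqOn_zero_of_preconnected_of_eventuallyEq_zero hU hz₀ hzero)

/-- If `f` and `ζ` are real-differentiable on a nonempty open connected set `U ⊆ ℂ` and
satisfy `∂ζ/∂z̄ = h` and `∂f/∂z̄ + h·f = 0` on `U`, then either `f ≡ 0` on `U`, or every
zero of `f` in `U` is isolated: it has a punctured neighborhood in `U` on which `f` does
not vanish. -/
theorem zeros_isolated_of_wirtinger_eq (U : Set ℂ) (hU : IsOpen U)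
    (hUconn : IsConnected U)
    (f ζ h : ℂ → ℂ)
    (hf : ∀ z ∈ U, DifferentiableAt ℝ f z)
    (hζ : ∀ z ∈ U, DifferentiableAt ℝ ζ z)
    (hζeq : ∀ z ∈ U, wirtingerBar ζ z = h z)
    (hfeq : ∀ z ∈ U, wirtingerBar f z + h z * f z = 0) :
    (∀ z ∈ U, f z = 0) ∨
      ∀ z₀ ∈ U, f z₀ = 0 →
        ∃ ε > 0, ∀ z ∈ U, z ≠ z₀ → ‖z - z₀‖ < ε → f z ≠ 0 := by
  set g : ℂ → ℂ := fun z => f z * exp (ζ z)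
  have hg_zero : ∀ z, g z = 0 ↔ f z = 0 := fun z => by simp [g, exp_ne_zero]
  have hg : AnalyticOnNhd ℂ g U := DifferentiableOn.analyticOnNhd (fun z hz =>
    (differentiableAt_mul_cexp_of_wirtingerBar_add_mul_eq_zero (hf z hz) (hζ z hz)
      (hζeq z hz ▸ hfeq z hz)).differentiableWithinAt) hU
  rcases hg.eqOn_zero_or_eventually_ne_zero_nhdsNE hUconn.isPreconnected with hzero | hne
  · exact Or.inl fun z hz => (hg_zero z).1 (hzero hz)
  · refine Or.inr fun z₀ hz₀ _ => ?_
    obtain ⟨ε, hε, hball⟩ := Metric.mem_nhdsWithin_iff.1 (hne z₀ hz₀)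
    refine ⟨ε, hε, fun z _ hzz₀ hzε => ?_⟩
    exact mt (hg_zero z).2 <| hball ⟨by rwa [Metric.mem_ball, dist_eq], hzz₀⟩
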